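/- Let n be an integer and Θ, φ real numbers. Define the unit quaternion g_n(Θ,φ) := exp((nφ/2)·k) · exp(−(Θ/2)·j) · exp(−(nφ/2)·k) and q_n(Θ,φ) := sin Θ cos(nφ)·i + sin Θ sin(nφ)·j + cos Θ·k. Then g_n(Θ,φ) has norm 1 (so is invertible) and g_n(Θ,φ) · q_n(Θ,φ) · g_n(Θ,φ)⁻¹ = k. (The gauge transformation g_n rotates the Charap–Duff field q_n into the constant imaginary unit k, exhibiting the Charap–Duff connection as Abelian.) -/

import Mathlib

open scoped Quaternion

/-- The imaginary unit `i` of the real quaternions. -/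
def qi : ℍ[ℝ] := ⟨0, 1, 0, 0⟩

/-- The imaginary unit `j` of the real quaternions. -/
def qj : ℍ[ℝ] := ⟨0, 0, 1, 0⟩

/-- The imaginary unit `k` of the real quaternions. -/
def qk : ℍ[ℝ] := ⟨0, 0, 0, 1⟩

/-- The gauge transformation `g_n(Θ,φ) = exp((nφ/2)k)·exp(−(Θ/2)j)·exp(−(nφ/2)k)` of
Etesi–Hausel. -/
noncomputable def gaugeG (n : ℤ) (Θ φ : ℝ) : ℍ[ℝ] :=
  NormedSpace.exp ((n * φ / 2 : ℝ) • qk) * NormedSpace.exp ((-(Θ / 2) : ℝ) • qj) *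
    NormedSpace.exp ((-(n * φ / 2) : ℝ) • qk)

/-- The Charap–Duff field `q_n(Θ,φ) = sin Θ cos(nφ)·i + sin Θ sin(nφ)·j + cos Θ·k`. -/
noncomputable def charapDuffQ (n : ℤ) (Θ φ : ℝ) : ℍ[ℝ] :=
  (Real.sin Θ * Real.cos (n * φ)) • qi + (Real.sin Θ * Real.sin (n * φ)) • qj
    + Real.cos Θ • qk

/-! Conjugation by `exp ((θ / 2) • u)`, for a unit imaginary quaternion `u`, is the rotation by
the angle `θ` about the axis `u`. With `A = exp ((nφ/2) • k)` and `B = exp ((Θ/2) • j)` this gives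
`q_n = (A B) k (A B)⁻¹` and `g_n = A B⁻¹ A⁻¹`, so `g_n q_n g_n⁻¹ = A k A⁻¹ = k`. -/

open NormedSpace Real

@[simp] lemma qi_re : qi.re = 0 := rfl
@[simp] lemma qi_imI : qi.imI = 1 := rfl
@[simp] lemma qi_imJ : qi.imJ = 0 := rfl
@[simp] lemma qi_imK : qi.imK = 0 := rfl
@[simp] lemma qj_re : qj.re = 0 := rfl
@[simp] lemma qj_imI : qj.imI = 0 := rfl
@[simp] lemma qj_imJ : qj.imJ = 1 := rfl
@[simp] lemma qj_imK : qj.imK = 0 := rfl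
@[simp] lemma qk_re : qk.re = 0 := rfl
@[simp] lemma qk_imI : qk.imI = 0 := rfl
@[simp] lemma qk_imJ : qk.imJ = 0 := rfl
@[simp] lemma qk_imK : qk.imK = 1 := rfl

lemma norm_qj : ‖qj‖ = 1 := by
  rw [norm_eq_sqrt_real_inner, Quaternion.inner_self]
  simp [Quaternion.normSq_def']

lemma norm_qk : ‖qk‖ = 1 := by
  rw [norm_eq_sqrt_real_inner, Quaternion.inner_self]
  simp [Quaternion.normSq_def']

namespace Quaternion

theorem exp_neg (q : ℍ[ℝ]) : exp (-q) = (exp q)⁻¹ := by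
  -- `ℍ[ℝ]` carries no global `NormedAlgebra ℚ` instance.
  let : NormedAlgebra ℚ ℍ[ℝ] := .restrictScalars ℚ ℝ ℍ[ℝ]
  exact NormedSpace.exp_neg q

theorem exp_ne_zero (q : ℍ[ℝ]) : exp q ≠ 0 := by
  rw [← norm_ne_zero_iff, norm_exp, ← Real.exp_eq_exp_ℝ, norm_ne_zero_iff]
  exact (Real.exp_pos _).ne'

theorem exp_smul_of_re_eq_zero_of_norm_eq_one {u : ℍ[ℝ]} (hre : u.re = 0) (hu : ‖u‖ = 1)
    (t : ℝ) : exp (t • u) = ↑(cos t) + sin t • u := by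
  have hnorm : ‖t • u‖ = |t| := by rw [norm_smul, hu, mul_one, Real.norm_eq_abs]
  have hsin : sin |t| / |t| * t = sin t := by
    rcases abs_choice t with h | h <;> rw [h]
    · exact div_mul_cancel_of_imp fun ht => by rw [ht, sin_zero]
    · rw [sin_neg, neg_div, div_neg, neg_neg]
      exact div_mul_cancel_of_imp fun ht => by rw [ht, sin_zero]
  rw [exp_of_re_eq_zero _ (by simp [hre]), hnorm, cos_abs, smul_smul, hsin]

end Quaternion

lemma exp_smul_qk (t : ℝ) : exp (t • qk) = ↑(cos t) + sin t • qk :=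
  Quaternion.exp_smul_of_re_eq_zero_of_norm_eq_one qk_re norm_qk t

lemma exp_smul_qj (t : ℝ) : exp (t • qj) = ↑(cos t) + sin t • qj :=
  Quaternion.exp_smul_of_re_eq_zero_of_norm_eq_one qj_re norm_qj t

lemma exp_half_smul_qk_conj (θ x y z : ℝ) :
    exp ((θ / 2) • qk) * (x • qi + y • qj + z • qk) * (exp ((θ / 2) • qk))⁻¹ =
      (x * cos θ - y * sin θ) • qi + (x * sin θ + y * cos θ) • qj + z • qk := by
  obtain ⟨s, rfl⟩ : ∃ s, θ = 2 * s := ⟨θ / 2, by ring⟩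
  rw [← Quaternion.exp_neg, ← neg_smul, exp_smul_qk, exp_smul_qk,
    mul_div_cancel_left₀ _ two_ne_zero, cos_neg, sin_neg, cos_two_mul', sin_two_mul]
  ext <;> simp
  · ring
  · ring
  · ring
  · linear_combination z * sin_sq_add_cos_sq s

lemma exp_half_smul_qj_conj_qk (θ : ℝ) :
    exp ((θ / 2) • qj) * qk * (exp ((θ / 2) • qj))⁻¹ = sin θ • qi + cos θ • qk := by
  obtain ⟨s, rfl⟩ : ∃ s, θ = 2 * s := ⟨θ / 2, by ring⟩
  rw [← Quaternion.exp_neg, ← neg_smul, exp_smul_qj, exp_smul_qj,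
    mul_div_cancel_left₀ _ two_ne_zero, cos_neg, sin_neg, cos_two_mul', sin_two_mul]
  ext <;> simp <;> ring

lemma charapDuffQ_eq_conj (n : ℤ) (Θ φ : ℝ) :
    charapDuffQ n Θ φ = exp ((n * φ / 2 : ℝ) • qk) *
      (exp ((Θ / 2) • qj) * qk * (exp ((Θ / 2) • qj))⁻¹) * (exp ((n * φ / 2 : ℝ) • qk))⁻¹ := by
  have hq : sin Θ • qi + cos Θ • qk = sin Θ • qi + (0 : ℝ) • qj + cos Θ • qk := by simp
  rw [exp_half_smul_qj_conj_qk, hq, exp_half_smul_qk_conj, charapDuffQ]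
  simp

lemma gaugeG_eq_conj (n : ℤ) (Θ φ : ℝ) :
    gaugeG n Θ φ = exp ((n * φ / 2 : ℝ) • qk) * (exp ((Θ / 2) • qj))⁻¹ *
      (exp ((n * φ / 2 : ℝ) • qk))⁻¹ := by
  simp only [gaugeG, neg_smul, Quaternion.exp_neg]

lemma norm_gaugeG (n : ℤ) (Θ φ : ℝ) : ‖gaugeG n Θ φ‖ = 1 := by
  simp [gaugeG]

/-- The gauge transformation `g_n` is a unit quaternion and rotates the Charap–Duff field
`q_n` into the constant imaginary unit `k`:
`‖g_n(Θ,φ)‖ = 1` and `g_n(Θ,φ) · q_n(Θ,φ) · g_n(Θ,φ)⁻¹ = k`. -/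
theorem gauge_rotates_charap_duff_field_to_k (n : ℤ) (Θ φ : ℝ) :
    ‖gaugeG n Θ φ‖ = 1 ∧
    gaugeG n Θ φ * charapDuffQ n Θ φ * (gaugeG n Θ φ)⁻¹ = qk := by
  refine ⟨norm_gaugeG n Θ φ, ?_⟩
  set A := exp ((n * φ / 2 : ℝ) • qk)
  set B := exp ((Θ / 2) • qj)
  have hA : A ≠ 0 := Quaternion.exp_ne_zero _
  have hB : B ≠ 0 := Quaternion.exp_ne_zero _
  have hAk : Commute A qk := ((Commute.refl qk).smul_left _).exp_left
  rw [gaugeG_eq_conj, charapDuffQ_eq_conj]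
  calc A * B⁻¹ * A⁻¹ * (A * (B * qk * B⁻¹) * A⁻¹) * (A * B⁻¹ * A⁻¹)⁻¹ = A * qk * A⁻¹ := by
        simp [mul_assoc, mul_inv_rev, hA, hB]
    _ = qk := by rw [hAk.eq, mul_inv_cancel_right₀ hA]
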